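/- arXiv:1210.6204 — 4 statements merged into one kernel-verified Lean document; each statement's English description precedes it below -/
import Mathlib

section
/- Let η be a differentiable probability density on [0,∞) with η' integrable and ∫₀^∞ (η')²/η < ∞. Then for every M > 0 and n ≥ 1, and for every h with 0 ≤ h ≤ M, the squared Hellinger distance between the densities x ↦ η(x − θ₀ − h/n) and x ↦ η(x − θ₀) is bounded by 2η(0)·M/n + 2(M²/n²)·(∫₀^∞ |η'(x)| dx + ∫₀^∞ (η')²(x)/η(x) dx). -/
open MeasureTheory

/-- The location family `p_θ(x) = η(x − θ)·1{x ≥ θ}`. -/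
noncomputable def locDens (η : ℝ → ℝ) (θ : ℝ) (x : ℝ) : ℝ :=
  if θ ≤ x then η (x - θ) else 0

/-!
Put `s = h / n` and translate by `θ₀`. The Hellinger integrand is then `η` on `[0, s)`, where only
`p_{θ₀}` is positive, and `(√η(x - s) - √η(x))²` on `[s, ∞)`. Writing `√η(b) - √η(a)` as the
integral of `η' / (2√η)` (for `η + ε`, then `ε → 0`, since `√η` need not be differentiable where
`η` vanishes) and applying Jensen's inequality gives
`(√η(b) - √η(a))² ≤ (b - a)/4 · ∫_{(a,b]} (η')²/η`.
On `[0, s)` this yields `η(x) ≤ 2η(0) + x·I/2`, with `I` the Fisher information; on `[s, ∞)`,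
integrating in `x` and exchanging the integrals yields `s²·I/4`. Hence `H² ≤ 2η(0)s + s²I`,
which is within the claimed bound because `s ≤ M/n`.
-/

open Set Filter Topology

theorem sq_setIntegral_le_measureReal_mul {α : Type*} [MeasurableSpace α] {μ : Measure α}
    {t : Set α} (ht : μ t ≠ ⊤) {f : α → ℝ} (hf : IntegrableOn f t μ)
    (hf2 : IntegrableOn (fun x => f x ^ 2) t μ) :
    (∫ x in t, f x ∂μ) ^ 2 ≤ μ.real t * ∫ x in t, f x ^ 2 ∂μ := by
  rcases eq_or_ne (μ t) 0 with h0 | h0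
  · simp [Measure.restrict_eq_zero.mpr h0]
  have hjensen := (Even.convexOn_pow (𝕜 := ℝ) even_two).map_set_average_le
    (continuous_pow 2).continuousOn isClosed_univ h0 ht (ae_of_all _ fun _ => mem_univ _) hf hf2
  have hpos : 0 < μ.real t := ENNReal.toReal_pos h0 ht
  simp only [setAverage_eq, smul_eq_mul, mul_pow] at hjensen
  rw [← mul_le_mul_iff_right₀ (inv_pos.mpr hpos)]
  calc (μ.real t)⁻¹ * (∫ x in t, f x ∂μ) ^ 2
      = μ.real t * ((μ.real t)⁻¹ ^ 2 * (∫ x in t, f x ∂μ) ^ 2) := by field_simp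
    _ ≤ μ.real t * ((μ.real t)⁻¹ * ∫ x in t, f x ^ 2 ∂μ) := by gcongr
    _ = (μ.real t)⁻¹ * (μ.real t * ∫ x in t, f x ^ 2 ∂μ) := by ring

theorem le_two_mul_add_two_mul_sq_sqrt_sub_sqrt {y z : ℝ} (hy : 0 ≤ y) (hz : 0 ≤ z) :
    y ≤ 2 * z + 2 * (√y - √z) ^ 2 := by
  nlinarith [Real.sq_sqrt hy, Real.sq_sqrt hz, sq_nonneg (√y - 2 * √z)]

theorem lintegral_Ici_lintegral_Ioc_sub_le {g : ℝ → ENNReal} (hg : Measurable g) (s : ℝ) :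
    ∫⁻ x in Ici s, ∫⁻ t in Ioc (x - s) x, g t ≤ ENNReal.ofReal s * ∫⁻ t in Ioi 0, g t := by
  have hswap : ∫⁻ x in Ici s, ∫⁻ t in Ioc (x - s) x, g t
      = ∫⁻ t, ∫⁻ x in Ici s, (Ico t (t + s)).indicator (fun _ => g t) x := by
    have hind : ∀ x t,
        (Ioc (x - s) x).indicator g t = (Ico t (t + s)).indicator (fun _ => g t) x := by
      intro x t
      simp only [indicator_apply, mem_Ioc, mem_Ico]
      congr 1
      apply propext
      constructor <;> rintro ⟨h1, h2⟩ <;> constructor <;> linarith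
    simp_rw [← lintegral_indicator measurableSet_Ioc, hind]
    refine lintegral_lintegral_swap (Measurable.aemeasurable ?_)
    refine Measurable.indicator (hg.comp measurable_snd) ?_
    exact (measurableSet_le measurable_snd measurable_fst).inter
      (measurableSet_lt measurable_fst (measurable_snd.add_const s))
  rw [hswap, ← lintegral_indicator measurableSet_Ioi,
    ← lintegral_const_mul' _ _ ENNReal.ofReal_ne_top]
  refine lintegral_mono fun t => ?_
  rw [lintegral_indicator_const measurableSet_Ico, Measure.restrict_apply measurableSet_Ico]
  by_cases ht : 0 < t
  · rw [indicator_of_mem (mem_Ioi.mpr ht), mul_comm]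
    gcongr
    calc volume (Ico t (t + s) ∩ Ici s) ≤ volume (Ico t (t + s)) := measure_mono inter_subset_left
      _ = ENNReal.ofReal s := by rw [Real.volume_Ico, add_sub_cancel_left]
  · have hempty : Ico t (t + s) ∩ Ici s = ∅ := by
      ext x
      simp only [mem_inter_iff, mem_Ico, mem_Ici, mem_empty_iff_false, iff_false]
      intro ⟨⟨_, h⟩, h'⟩
      linarith [not_lt.mp ht]
    simp [hempty]

section Density

variable {η : ℝ → ℝ}

theorem deriv_eq_zero_of_nonneg_of_eq_zero (hnn : ∀ x, 0 ≤ η x) {t : ℝ} (ht : η t = 0) :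
    deriv η t = 0 :=
  IsLocalMin.deriv_eq_zero (Eventually.of_forall fun x => ht ▸ hnn x)

/-- At a zero of `η` the derivative vanishes too (`η` is minimal there), so the junk value
`0 / 0 = 0` of the right-hand side is harmless. -/
theorem sq_deriv_div_two_sqrt_add_le (hnn : ∀ x, 0 ≤ η x) (t : ℝ) {ε : ℝ} (hε : 0 < ε) :
    (deriv η t / (2 * √(η t + ε))) ^ 2 ≤ deriv η t ^ 2 / η t / 4 := by
  rcases (hnn t).eq_or_lt with h0 | hpos
  · simp [deriv_eq_zero_of_nonneg_of_eq_zero hnn h0.symm]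
  rw [div_pow, mul_pow, Real.sq_sqrt (by linarith), div_div]
  exact div_le_div_of_nonneg_left (sq_nonneg _) (by positivity) (by linarith)

theorem sq_sqrt_add_sub_sqrt_add_le (hnn : ∀ x, 0 ≤ η x) (hdiff : Differentiable ℝ η)
    {a b : ℝ} (hab : a ≤ b) (hq : IntegrableOn (fun t => deriv η t ^ 2 / η t) (Ioc a b))
    {ε : ℝ} (hε : 0 < ε) :
    (√(η b + ε) - √(η a + ε)) ^ 2 ≤ (b - a) / 4 * ∫ t in Ioc a b, deriv η t ^ 2 / η t := by
  set g : ℝ → ℝ := fun t => deriv η t / (2 * √(η t + ε))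
  have hg_deriv : ∀ t, HasDerivAt (fun u => √(η u + ε)) (g t) t := fun t =>
    ((hdiff t).hasDerivAt.add_const ε).sqrt (by linarith [hnn t])
  have hg_meas : Measurable g := (measurable_deriv η).div
    (measurable_const.mul (hdiff.continuous.add continuous_const).sqrt.measurable)
  have hg2 : IntegrableOn (fun t => g t ^ 2) (Ioc a b) :=
    (hq.div_const 4).mono' (hg_meas.pow_const 2).aestronglyMeasurable
      (Eventually.of_forall fun t => by
        rw [Real.norm_eq_abs, abs_of_nonneg (sq_nonneg _)]
        exact sq_deriv_div_two_sqrt_add_le hnn t hε)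
  have hg : IntegrableOn g (Ioc a b) :=
    ((memLp_two_iff_integrable_sq hg_meas.aestronglyMeasurable).mpr hg2).integrable one_le_two
  have hftc : √(η b + ε) - √(η a + ε) = ∫ t in Ioc a b, g t := by
    rw [← intervalIntegral.integral_of_le hab, intervalIntegral.integral_eq_sub_of_hasDerivAt
      (fun t _ => hg_deriv t) ((intervalIntegrable_iff_integrableOn_Ioc_of_le hab).mpr hg)]
  calc (√(η b + ε) - √(η a + ε)) ^ 2
      ≤ (b - a) * ∫ t in Ioc a b, g t ^ 2 := by
        rw [hftc]
        simpa [Real.volume_real_Ioc_of_le hab] using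
          sq_setIntegral_le_measureReal_mul measure_Ioc_lt_top.ne hg hg2
    _ ≤ (b - a) * ∫ t in Ioc a b, deriv η t ^ 2 / η t / 4 := by
        refine mul_le_mul_of_nonneg_left ?_ (sub_nonneg.mpr hab)
        exact setIntegral_mono_on hg2 (hq.div_const 4) measurableSet_Ioc
          fun t _ => sq_deriv_div_two_sqrt_add_le hnn t hε
    _ = (b - a) / 4 * ∫ t in Ioc a b, deriv η t ^ 2 / η t := by
        rw [integral_div]; ring

theorem sq_sqrt_sub_sqrt_le (hnn : ∀ x, 0 ≤ η x) (hdiff : Differentiable ℝ η)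
    {a b : ℝ} (hab : a ≤ b) (hq : IntegrableOn (fun t => deriv η t ^ 2 / η t) (Ioc a b)) :
    (√(η b) - √(η a)) ^ 2 ≤ (b - a) / 4 * ∫ t in Ioc a b, deriv η t ^ 2 / η t := by
  have hcont : Continuous fun ε : ℝ => (√(η b + ε) - √(η a + ε)) ^ 2 := by fun_prop
  refine le_of_tendsto (x := 𝓝[>] 0) ?_ (eventually_nhdsWithin_of_forall fun ε hε =>
    sq_sqrt_add_sub_sqrt_add_le hnn hdiff hab hq (mem_Ioi.mp hε))
  simpa using (hcont.tendsto 0).mono_left nhdsWithin_le_nhds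

theorem sq_sqrt_sub_sqrt_le_of_nonneg (hnn : ∀ x, 0 ≤ η x) (hdiff : Differentiable ℝ η)
    (hfisher : IntegrableOn (fun t => deriv η t ^ 2 / η t) (Ioi 0)) {a b : ℝ} (ha : 0 ≤ a)
    (hab : a ≤ b) :
    (√(η b) - √(η a)) ^ 2 ≤ (b - a) / 4 * ∫ t in Ioi 0, deriv η t ^ 2 / η t := by
  have hsub : Ioc a b ⊆ Ioi 0 := Ioc_subset_Ioi_self.trans (Ioi_subset_Ioi ha)
  refine (sq_sqrt_sub_sqrt_le hnn hdiff hab (hfisher.mono_set hsub)).trans ?_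
  refine mul_le_mul_of_nonneg_left ?_ (by linarith)
  exact setIntegral_mono_set hfisher (ae_of_all _ fun t => div_nonneg (sq_nonneg _) (hnn t))
    hsub.eventuallyLE

theorem setLIntegral_Ico_le (hnn : ∀ x, 0 ≤ η x) (hdiff : Differentiable ℝ η)
    (hfisher : IntegrableOn (fun t => deriv η t ^ 2 / η t) (Ioi 0)) {s : ℝ} (hs : 0 ≤ s) :
    ∫⁻ x in Ico 0 s, ENNReal.ofReal (η x) ≤
      ENNReal.ofReal (s * (2 * η 0 + s * (∫ t in Ioi 0, deriv η t ^ 2 / η t) / 2)) := by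
  set I := ∫ t in Ioi 0, deriv η t ^ 2 / η t
  have hI : 0 ≤ I := integral_nonneg fun t => div_nonneg (sq_nonneg _) (hnn t)
  have hbound : ∀ x ∈ Ico 0 s, η x ≤ 2 * η 0 + s * I / 2 := fun x ⟨hx0, hxs⟩ =>
    calc η x ≤ 2 * η 0 + 2 * (√(η x) - √(η 0)) ^ 2 :=
          le_two_mul_add_two_mul_sq_sqrt_sub_sqrt (hnn x) (hnn 0)
      _ ≤ 2 * η 0 + 2 * ((x - 0) / 4 * I) := by
          gcongr; exact sq_sqrt_sub_sqrt_le_of_nonneg hnn hdiff hfisher le_rfl hx0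
      _ ≤ 2 * η 0 + s * I / 2 := by nlinarith
  calc ∫⁻ x in Ico 0 s, ENNReal.ofReal (η x)
      ≤ ∫⁻ _ in Ico 0 s, ENNReal.ofReal (2 * η 0 + s * I / 2) :=
        setLIntegral_mono' measurableSet_Ico fun x hx => ENNReal.ofReal_le_ofReal (hbound x hx)
    _ = ENNReal.ofReal (s * (2 * η 0 + s * I / 2)) := by
        rw [setLIntegral_const, Real.volume_Ico, sub_zero, mul_comm, ENNReal.ofReal_mul hs]

theorem setLIntegral_Ici_sq_sqrt_sub_le (hnn : ∀ x, 0 ≤ η x) (hdiff : Differentiable ℝ η)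
    (hfisher : IntegrableOn (fun t => deriv η t ^ 2 / η t) (Ioi 0)) {s : ℝ} (hs : 0 ≤ s) :
    ∫⁻ x in Ici s, ENNReal.ofReal ((√(η (x - s)) - √(η x)) ^ 2) ≤
      ENNReal.ofReal (s ^ 2 * (∫ t in Ioi 0, deriv η t ^ 2 / η t) / 4) := by
  set q : ℝ → ℝ := fun t => deriv η t ^ 2 / η t
  have hq : ∀ t, 0 ≤ q t := fun t => div_nonneg (sq_nonneg _) (hnn t)
  have hbound : ∀ x ∈ Ici s, ENNReal.ofReal ((√(η (x - s)) - √(η x)) ^ 2) ≤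
      ENNReal.ofReal (s / 4) * ∫⁻ t in Ioc (x - s) x, ENNReal.ofReal (q t) := by
    intro x hx
    have hqx : IntegrableOn q (Ioc (x - s) x) :=
      hfisher.mono_set (Ioc_subset_Ioi_self.trans (Ioi_subset_Ioi (sub_nonneg.mpr hx)))
    rw [← ofReal_integral_eq_lintegral_ofReal hqx (ae_of_all _ hq),
      ← ENNReal.ofReal_mul (by positivity)]
    refine ENNReal.ofReal_le_ofReal ?_
    simpa [sub_sq_comm (√(η (x - s)))] using sq_sqrt_sub_sqrt_le hnn hdiff (sub_le_self x hs) hqx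
  calc ∫⁻ x in Ici s, ENNReal.ofReal ((√(η (x - s)) - √(η x)) ^ 2)
      ≤ ∫⁻ x in Ici s, ENNReal.ofReal (s / 4) * ∫⁻ t in Ioc (x - s) x, ENNReal.ofReal (q t) :=
        setLIntegral_mono' measurableSet_Ici hbound
    _ ≤ ENNReal.ofReal (s / 4) * (ENNReal.ofReal s * ∫⁻ t in Ioi 0, ENNReal.ofReal (q t)) := by
        rw [lintegral_const_mul' _ _ ENNReal.ofReal_ne_top]
        gcongr
        exact lintegral_Ici_lintegral_Ioc_sub_le
          (ENNReal.measurable_ofReal.comp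
            (((measurable_deriv η).pow_const 2).div hdiff.continuous.measurable)) s
    _ = ENNReal.ofReal (s ^ 2 * (∫ t in Ioi 0, q t) / 4) := by
        rw [← ofReal_integral_eq_lintegral_ofReal hfisher (ae_of_all _ hq),
          ← ENNReal.ofReal_mul hs, ← ENNReal.ofReal_mul (by positivity)]
        ring_nf

theorem locDens_add_apply (η : ℝ → ℝ) (θ θ' x : ℝ) :
    locDens η (θ + θ') x = locDens η θ' (x - θ) := by
  simp only [locDens, le_sub_iff_add_le', sub_sub]

theorem lintegral_sq_sqrt_locDens_sub_le (hnn : ∀ x, 0 ≤ η x) (hdiff : Differentiable ℝ η)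
    (hfisher : IntegrableOn (fun t => deriv η t ^ 2 / η t) (Ioi 0)) (θ : ℝ) {s : ℝ} (hs : 0 ≤ s) :
    ∫⁻ x, ENNReal.ofReal ((√(locDens η (θ + s) x) - √(locDens η θ x)) ^ 2) ≤
      ENNReal.ofReal (2 * η 0 * s + s ^ 2 * ∫ t in Ioi 0, deriv η t ^ 2 / η t) := by
  set I := ∫ t in Ioi 0, deriv η t ^ 2 / η t
  have hI : 0 ≤ I := integral_nonneg fun t => div_nonneg (sq_nonneg _) (hnn t)
  set G : ℝ → ENNReal := fun x => ENNReal.ofReal ((√(locDens η s x) - √(locDens η 0 x)) ^ 2)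
  have hshift : ∀ x, locDens η θ x = locDens η 0 (x - θ) := fun x => by
    simpa using locDens_add_apply η θ 0 x
  have hsplit : ∀ x, G x = (Ico 0 s).indicator (fun x => ENNReal.ofReal (η x)) x +
      (Ici s).indicator (fun x => ENNReal.ofReal ((√(η (x - s)) - √(η x)) ^ 2)) x := by
    intro x
    rcases lt_or_ge x s with hxs | hxs
    · rcases lt_or_ge x 0 with hx0 | hx0
      · simp [G, locDens, hxs, not_le.mpr hxs, not_le.mpr hx0]
      · simp [G, locDens, hxs, hx0, not_le.mpr hxs, Real.sq_sqrt (hnn x)]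
    · simp [G, locDens, hxs, hs.trans hxs, not_lt.mpr hxs]
  calc ∫⁻ x, ENNReal.ofReal ((√(locDens η (θ + s) x) - √(locDens η θ x)) ^ 2)
      = ∫⁻ x, G (x - θ) := by simp only [G, locDens_add_apply, hshift]
    _ = (∫⁻ x in Ico 0 s, ENNReal.ofReal (η x)) +
          ∫⁻ x in Ici s, ENNReal.ofReal ((√(η (x - s)) - √(η x)) ^ 2) := by
        rw [lintegral_sub_right_eq_self G θ, lintegral_congr hsplit, lintegral_add_left
          (hdiff.continuous.measurable.ennreal_ofReal.indicator measurableSet_Ico),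
          lintegral_indicator measurableSet_Ico, lintegral_indicator measurableSet_Ici]
    _ ≤ ENNReal.ofReal (s * (2 * η 0 + s * I / 2)) + ENNReal.ofReal (s ^ 2 * I / 4) :=
        add_le_add (setLIntegral_Ico_le hnn hdiff hfisher hs)
          (setLIntegral_Ici_sq_sqrt_sub_le hnn hdiff hfisher hs)
    _ ≤ ENNReal.ofReal (2 * η 0 * s + s ^ 2 * I) := by
        rw [← ENNReal.ofReal_add (by have := hnn 0; positivity) (by positivity)]
        exact ENNReal.ofReal_le_ofReal (by nlinarith)

end Density

theorem stmt_7_general (η : ℝ → ℝ) (hnn : ∀ x, 0 ≤ η x) (hdiff : Differentiable ℝ η)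
    (hint2 : IntegrableOn (fun x => (deriv η x) ^ 2 / η x) (Set.Ioi 0) volume)
    (θ₀ M : ℝ) (n : ℕ)
    (h : ℝ) (hh0 : 0 ≤ h) (hhM : h ≤ M) :
    ∫ x, (Real.sqrt (locDens η (θ₀ + h / n) x) - Real.sqrt (locDens η θ₀ x)) ^ 2 ≤
      2 * η 0 * M / n +
        2 * (M ^ 2 / (n : ℝ) ^ 2) *
          ((∫ x in Set.Ioi (0 : ℝ), |deriv η x|) +
            ∫ x in Set.Ioi (0 : ℝ), (deriv η x) ^ 2 / η x) := by
  set I := ∫ x in Ioi 0, deriv η x ^ 2 / η x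
  have hI : 0 ≤ I := integral_nonneg fun t => div_nonneg (sq_nonneg _) (hnn t)
  have hJ : 0 ≤ ∫ x in Ioi 0, |deriv η x| := integral_nonneg fun _ => abs_nonneg _
  have hs : 0 ≤ h / n := by positivity
  have hsM : h / n ≤ M / n := div_le_div_of_nonneg_right hhM n.cast_nonneg
  calc ∫ x, (√(locDens η (θ₀ + h / n) x) - √(locDens η θ₀ x)) ^ 2
      ≤ ‖∫ x, (√(locDens η (θ₀ + h / n) x) - √(locDens η θ₀ x)) ^ 2‖ := Real.le_norm_self _
    _ ≤ 2 * η 0 * (h / n) + (h / n) ^ 2 * I := by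
        refine (norm_integral_le_lintegral_norm _).trans (ENNReal.toReal_le_of_le_ofReal
          (by have := hnn 0; positivity) ?_)
        simpa only [Real.norm_eq_abs, abs_sq] using
          lintegral_sq_sqrt_locDens_sub_le hnn hdiff hint2 θ₀ hs
    _ ≤ 2 * η 0 * M / n + 2 * (M ^ 2 / (n : ℝ) ^ 2) * ((∫ x in Ioi 0, |deriv η x|) + I) := by
        have hsq : (h / n) ^ 2 ≤ M ^ 2 / (n : ℝ) ^ 2 := by
          rw [← div_pow]; exact pow_le_pow_left₀ hs hsM 2
        have h0 : 0 ≤ 2 * η 0 := by linarith [hnn 0]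
        rw [mul_div_assoc]
        nlinarith [mul_le_mul_of_nonneg_left hsM h0, mul_le_mul_of_nonneg_right hsq hI,
          mul_nonneg (div_nonneg (sq_nonneg M) (sq_nonneg (n : ℝ))) hJ]

/-- Hellinger bound in the location model: for a differentiable density `η` on
`[0,∞)` with integrable `η'` and finite Fisher information, and `0 ≤ h ≤ M`,
`H²(p_{θ₀+h/n}, p_{θ₀}) ≤ 2η(0)M/n + 2(M²/n²)(∫|η'| + ∫(η')²/η)`. -/
theorem stmt_7 (η : ℝ → ℝ) (hnn : ∀ x, 0 ≤ η x) (hdiff : Differentiable ℝ η)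
    (hdens : ∫ x in Set.Ici (0 : ℝ), η x = 1)
    (hint1 : IntegrableOn (fun x => |deriv η x|) (Set.Ioi 0) volume)
    (hint2 : IntegrableOn (fun x => (deriv η x) ^ 2 / η x) (Set.Ioi 0) volume)
    (θ₀ M : ℝ) (hM : 0 < M) (n : ℕ) (hn : 1 ≤ n)
    (h : ℝ) (hh0 : 0 ≤ h) (hhM : h ≤ M) :
    ∫ x, (Real.sqrt (locDens η (θ₀ + h / n) x) - Real.sqrt (locDens η θ₀ x)) ^ 2 ≤
      2 * η 0 * M / n +
        2 * (M ^ 2 / (n : ℝ) ^ 2) *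
          ((∫ x in Set.Ioi (0 : ℝ), |deriv η x|) +
            ∫ x in Set.Ioi (0 : ℝ), (deriv η x) ^ 2 / η x) :=
  stmt_7_general η hnn hdiff hint2 θ₀ M n h hh0 hhM
end

section
/- Suppose a family of densities satisfies the log-Lipschitz bound p_{θ,η}(x)/p_{θ₀,η}(x) ≤ e^{m(x)|θ−θ₀|} on the support of p_{θ₀,η}, where E_{θ₀,η}[e^{K·m(X)}] < ∞ for all K > 0. Then for any stochastic sequence (h_n) bounded by M, the expectation under P_{θ₀,η}ⁿ of the likelihood ratio ∏_{i=1}^n p_{θ₀+h_n/n, η}(X_i)/p_{θ₀,η}(X_i) is bounded by E_{θ₀,η}[e^{M·m(X)}], uniformly in n. -/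
open MeasureTheory ProbabilityTheory

/-!
Since `|θₙ - θ₀| ≤ M / n`, the log-Lipschitz bound gives pointwise
`∏ᵢ r(θₙ)(xᵢ) ≤ exp((1/n) ∑ᵢ M m(xᵢ)) ≤ (1/n) ∑ᵢ exp(M m(xᵢ))`, the second step by convexity
of `exp`. The right-hand side no longer involves `hₙ`, and each summand has expectation
`E[e^{M m}]` under the product measure.
-/

open Finset Real

section Pointwise

variable {ι : Type*}

theorem prod_le_exp_sum {s : Finset ι} {f g : ι → ℝ} (hf : ∀ i ∈ s, 0 ≤ f i)
    (hfg : ∀ i ∈ s, f i ≤ exp (g i)) : ∏ i ∈ s, f i ≤ exp (∑ i ∈ s, g i) := by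
  rw [exp_sum]
  exact prod_le_prod hf hfg

variable [Fintype ι] [Nonempty ι]

theorem exp_sum_div_card_le (a : ι → ℝ) :
    exp (∑ i, a i / Fintype.card ι) ≤ (∑ i, exp (a i)) / Fintype.card ι := by
  have hcard : (0 : ℝ) < Fintype.card ι := by exact_mod_cast Fintype.card_pos
  have jensen := convexOn_exp.map_sum_le (t := univ) (w := fun _ => 1 / (Fintype.card ι : ℝ))
    (p := a) (fun _ _ => by positivity) (by simp [card_univ, hcard.ne']) (fun _ _ => trivial)
  simpa only [smul_eq_mul, one_div_mul_eq_div, ← sum_div] using jensen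

theorem prod_le_sum_exp_div_card {r m : ι → ℝ} {c M : ℝ} (hr0 : ∀ i, 0 ≤ r i)
    (hm : ∀ i, 0 ≤ m i) (hc : c * Fintype.card ι ≤ M) (hr : ∀ i, r i ≤ exp (m i * c)) :
    ∏ i, r i ≤ (∑ i, exp (M * m i)) / Fintype.card ι := by
  have hcard : (0 : ℝ) < Fintype.card ι := by exact_mod_cast Fintype.card_pos
  have hc' : c ≤ M / Fintype.card ι := (le_div_iff₀ hcard).2 hc
  calc ∏ i, r i ≤ exp (∑ i, M * m i / Fintype.card ι) := by
        refine prod_le_exp_sum (fun i _ => hr0 i) fun i _ => (hr i).trans ?_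
        rw [exp_le_exp, mul_comm M, mul_div_assoc]
        exact mul_le_mul_of_nonneg_left hc' (hm i)
    _ ≤ (∑ i, exp (M * m i)) / Fintype.card ι := exp_sum_div_card_le _

end Pointwise

theorem integral_sum_comp_eval_div_card {ι X : Type*} [Fintype ι] [Nonempty ι]
    [MeasurableSpace X] (μ : Measure X) [IsProbabilityMeasure μ] {f : X → ℝ}
    (hf : Integrable f μ) :
    ∫ x : ι → X, (∑ i, f (x i)) / Fintype.card ι ∂Measure.pi (fun _ => μ) = ∫ x, f x ∂μ := by
  have hcard : (Fintype.card ι : ℝ) ≠ 0 := by exact_mod_cast Fintype.card_ne_zero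
  rw [integral_div,
    integral_finsetSum _ fun i _ => integrable_comp_eval (μ := fun _ => μ) (i := i) hf]
  simp only [fun i => integral_comp_eval (μ := fun _ => μ) (i := i) hf.1, sum_const, card_univ,
    nsmul_eq_mul]
  field_simp

theorem stmt_10_general {X : Type*} [MeasurableSpace X] (μ : Measure X) [IsProbabilityMeasure μ]
    (θ₀ M : ℝ) (hM : 0 < M)
    (m : X → ℝ) (hmpos : ∀ x, 0 < m x)
    (r : ℝ → X → ℝ) (hr0 : ∀ θ x, 0 ≤ r θ x)
    (hlip : ∀ θ x, r θ x ≤ Real.exp (m x * |θ - θ₀|))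
    (hintK : ∀ K : ℝ, 0 < K → Integrable (fun x => Real.exp (K * m x)) μ)
    (n : ℕ) (hn : 1 ≤ n)
    (h : (Fin n → X) → ℝ) (hb : ∀ x, |h x| ≤ M) :
    ∫ x : Fin n → X, (∏ i, r (θ₀ + h x / n) (x i)) ∂(Measure.pi fun _ => μ) ≤
      ∫ x, Real.exp (M * m x) ∂μ := by
  have : Nonempty (Fin n) := ⟨⟨0, hn⟩⟩
  have hint := hintK M hM
  have hbound (x : Fin n → X) :
      ∏ i, r (θ₀ + h x / n) (x i) ≤ (∑ i, exp (M * m (x i))) / Fintype.card (Fin n) := by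
    refine prod_le_sum_exp_div_card (fun _ => hr0 _ _) (fun i => (hmpos (x i)).le) ?_
      fun i => hlip _ (x i)
    rw [add_sub_cancel_left, abs_div, Nat.abs_cast, Fintype.card_fin,
      div_mul_cancel₀ _ (by positivity)]
    exact hb x
  calc _ ≤ ∫ x : Fin n → X, (∑ i, exp (M * m (x i))) / Fintype.card (Fin n)
          ∂Measure.pi fun _ => μ :=
        integral_mono_of_nonneg (ae_of_all _ fun _ => prod_nonneg fun _ _ => hr0 _ _)
          ((integrable_finsetSum _ fun i _ =>
            integrable_comp_eval (μ := fun _ => μ) (i := i) hint).div_const _)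
          (ae_of_all _ hbound)
    _ = _ := integral_sum_comp_eval_div_card μ hint

/-- Domination under a log-Lipschitz bound: if the likelihood ratios
`r θ x = p_{θ,η}(x)/p_{θ₀,η}(x)` satisfy `r θ x ≤ exp(m(x)|θ−θ₀|)` with
`E[e^{K·m}] < ∞` for all `K > 0`, then for any stochastic sequence `h` bounded
by `M`, the expectation under `P_{θ₀,η}ⁿ` of `∏ᵢ r(θ₀ + h/n)(Xᵢ)` is bounded by
`E[e^{M·m}]`, uniformly in `n`. -/
theorem stmt_10 {X : Type*} [MeasurableSpace X] (μ : Measure X) [IsProbabilityMeasure μ]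
    (θ₀ M : ℝ) (hM : 0 < M)
    (m : X → ℝ) (hmmeas : Measurable m) (hmpos : ∀ x, 0 < m x)
    (r : ℝ → X → ℝ) (hr0 : ∀ θ x, 0 ≤ r θ x)
    (hlip : ∀ θ x, r θ x ≤ Real.exp (m x * |θ - θ₀|))
    (hintK : ∀ K : ℝ, 0 < K → Integrable (fun x => Real.exp (K * m x)) μ)
    (n : ℕ) (hn : 1 ≤ n)
    (h : (Fin n → X) → ℝ) (hb : ∀ x, |h x| ≤ M) :
    ∫ x : Fin n → X, (∏ i, r (θ₀ + h x / n) (x i)) ∂(Measure.pi fun _ => μ) ≤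
      ∫ x, Real.exp (M * m x) ∂μ :=
  stmt_10_general μ θ₀ M hM m hmpos r hr0 hlip hintK n hn h hb
end

section
/- Suppose p_{θ,η}/p_{θ₀,η}(x) ≤ e^{m(x)|θ−θ₀|} on the support of p_{θ₀,η}, with E_{θ₀,η}[e^{qM·m(X)}] < ∞ for some q > 1 and all M > 0. Then for any sequence of events F_n with P_{θ₀,η}ⁿ(F_n) → 0 and any stochastic (h_n) bounded by M, also P_{θ₀+h_n/n, η}ⁿ(F_n) → 0 (i.e., the sequence P_{θ₀+h_n/n,η}ⁿ is contiguous with respect to P_{θ₀,η}ⁿ). -/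
open MeasureTheory ProbabilityTheory Filter

/-!
By Hölder's inequality, the integral of the likelihood ratio over `Fₙ` is at most
`P_{θ₀}ⁿ(Fₙ)^{1/p}` times its `Lᵠ` norm. The log-Lipschitz bound dominates the ratio by
`∏ᵢ exp(M m(Xᵢ)/n)`, whose `q`-th moment factorizes as `(E exp(qMm/n))ⁿ`. Convexity of `exp`
gives `E exp(qMm/n) ≤ 1 + (E exp(qMm) - 1)/n`, so these moments stay below
`exp(E exp(qMm) - 1)` uniformly in `n`.
-/

theorem memLp_ofReal_of_integrable_rpow {α : Type*} [MeasurableSpace α] {ν : Measure α}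
    {g : α → ℝ} (hg0 : 0 ≤ g) (hg : AEStronglyMeasurable g ν) {q : ℝ} (hq : 0 < q)
    (hgq : Integrable (fun x => g x ^ q) ν) :
    MemLp g (ENNReal.ofReal q) ν := by
  rw [← integrable_norm_rpow_iff hg (by simp [hq]) ENNReal.ofReal_ne_top,
    ENNReal.toReal_ofReal hq.le]
  exact hgq.congr (.of_forall fun x => by simp [Real.norm_of_nonneg (hg0 x)])

theorem setIntegral_le_measureReal_rpow_mul_integral_rpow {α : Type*} [MeasurableSpace α]
    {ν : Measure α} [IsFiniteMeasure ν] {p q : ℝ} (hpq : p.HolderConjugate q) (s : Set α)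
    {g : α → ℝ} (hg0 : 0 ≤ g) (hg : AEStronglyMeasurable g ν)
    (hgq : Integrable (fun x => g x ^ q) ν) :
    ∫ x in s, g x ∂ν ≤ ν.real s ^ (1 / p) * (∫ x, g x ^ q ∂ν) ^ (1 / q) := by
  calc ∫ x in s, g x ∂ν = ∫ x in s, 1 * g x ∂ν := by simp
    _ ≤ (∫ _ in s, (1 : ℝ) ^ p ∂ν) ^ (1 / p) * (∫ x in s, g x ^ q ∂ν) ^ (1 / q) :=
      integral_mul_le_Lp_mul_Lq_of_nonneg hpq (.of_forall fun _ => zero_le_one)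
        (.of_forall hg0) (memLp_const 1)
        ((memLp_ofReal_of_integrable_rpow hg0 hg hpq.symm.pos hgq).restrict s)
    _ ≤ ν.real s ^ (1 / p) * (∫ x, g x ^ q ∂ν) ^ (1 / q) := by
      simp only [Real.one_rpow, integral_const, smul_eq_mul, mul_one,
        measureReal_restrict_apply_univ]
      gcongr
      · exact integral_nonneg fun x => Real.rpow_nonneg (hg0 x) q
      · exact one_div_nonneg.2 hpq.symm.nonneg
      · exact .of_forall fun x => Real.rpow_nonneg (hg0 x) q
      · exact Measure.restrict_le_self

theorem Real.exp_mul_le_one_sub_add_mul_exp {t : ℝ} (ht₀ : 0 ≤ t) (ht₁ : t ≤ 1) (a : ℝ) :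
    Real.exp (t * a) ≤ 1 - t + t * Real.exp a := by
  simpa using convexOn_exp.2 (Set.mem_univ 0) (Set.mem_univ a) (sub_nonneg.2 ht₁) ht₀
    (sub_add_cancel 1 t)

section ExpMoment

variable {X : Type*} [MeasurableSpace X] {μ : Measure X} {a : X → ℝ} {t : ℝ}

theorem integrable_exp_mul_of_integrable_exp [IsFiniteMeasure μ] (ha : AEStronglyMeasurable a μ)
    (hint : Integrable (fun x => Real.exp (a x)) μ) (ht₀ : 0 ≤ t) (ht₁ : t ≤ 1) :
    Integrable (fun x => Real.exp (t * a x)) μ := by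
  refine ((integrable_const (1 - t)).add (hint.const_mul t)).mono'
    (Real.continuous_exp.comp_aestronglyMeasurable (ha.const_mul t)) (ae_of_all _ fun x => ?_)
  rw [Real.norm_of_nonneg (Real.exp_pos _).le]
  exact Real.exp_mul_le_one_sub_add_mul_exp ht₀ ht₁ (a x)

theorem integral_exp_mul_le [IsProbabilityMeasure μ] (ha : AEStronglyMeasurable a μ)
    (hint : Integrable (fun x => Real.exp (a x)) μ) (ht₀ : 0 ≤ t) (ht₁ : t ≤ 1) :
    ∫ x, Real.exp (t * a x) ∂μ ≤ 1 + t * (∫ x, Real.exp (a x) ∂μ - 1) := by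
  calc ∫ x, Real.exp (t * a x) ∂μ ≤ ∫ x, (1 - t + t * Real.exp (a x)) ∂μ :=
        integral_mono (integrable_exp_mul_of_integrable_exp ha hint ht₀ ht₁)
          ((integrable_const _).add (hint.const_mul t))
          fun x => Real.exp_mul_le_one_sub_add_mul_exp ht₀ ht₁ (a x)
    _ = 1 + t * (∫ x, Real.exp (a x) ∂μ - 1) := by
      rw [integral_add (integrable_const _) (hint.const_mul t), integral_const_mul]
      simp only [integral_const, probReal_univ, smul_eq_mul, one_mul]
      ring

theorem integral_exp_inv_mul_pow_le [IsProbabilityMeasure μ] (ha : AEStronglyMeasurable a μ)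
    (hint : Integrable (fun x => Real.exp (a x)) μ) {n : ℕ} (hn : n ≠ 0) :
    (∫ x, Real.exp ((n : ℝ)⁻¹ * a x) ∂μ) ^ n ≤ Real.exp (∫ x, Real.exp (a x) ∂μ - 1) := by
  have hn' : (1 : ℝ) ≤ n := by exact_mod_cast Nat.one_le_iff_ne_zero.2 hn
  calc (∫ x, Real.exp ((n : ℝ)⁻¹ * a x) ∂μ) ^ n
      ≤ Real.exp ((n : ℝ)⁻¹ * (∫ x, Real.exp (a x) ∂μ - 1)) ^ n := by
        gcongr
        calc _ ≤ 1 + (n : ℝ)⁻¹ * (∫ x, Real.exp (a x) ∂μ - 1) :=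
              integral_exp_mul_le ha hint (by positivity) (inv_le_one_of_one_le₀ hn')
          _ ≤ _ := by linarith [Real.add_one_le_exp ((n : ℝ)⁻¹ * (∫ x, Real.exp (a x) ∂μ - 1))]
    _ = Real.exp (∫ x, Real.exp (a x) ∂μ - 1) := by
      rw [← Real.exp_nat_mul, mul_inv_cancel_left₀ (by positivity)]

end ExpMoment

section PiRpow

variable {X ι : Type*} [MeasurableSpace X] (μ : Measure X) [SigmaFinite μ] [Fintype ι]
  {f : X → ℝ}

theorem integrable_pi_prod_rpow (hf0 : 0 ≤ f) {q : ℝ} (hf : Integrable (fun y => f y ^ q) μ) :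
    Integrable (fun x : ι → X => (∏ i, f (x i)) ^ q) (Measure.pi fun _ => μ) := by
  simp_rw [← Real.finsetProd_rpow _ _ (fun i _ => hf0 _)]
  exact Integrable.fintype_prod (μ := fun _ => μ) fun _ => hf

theorem integral_pi_prod_rpow (hf0 : 0 ≤ f) (q : ℝ) :
    ∫ x : ι → X, (∏ i, f (x i)) ^ q ∂(Measure.pi fun _ => μ)
      = (∫ y, f y ^ q ∂μ) ^ Fintype.card ι := by
  simp_rw [← Real.finsetProd_rpow _ _ (fun i _ => hf0 _)]
  exact integral_fintype_prod_eq_pow (μ := μ) (fun y => f y ^ q)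

end PiRpow

theorem prod_le_prod_exp_of_abs_sub_le {X ι : Type*} {θ₀ : ℝ} {m : X → ℝ} {r : ℝ → X → ℝ}
    (s : Finset ι) (hm : ∀ x, 0 ≤ m x)
    (hr0 : ∀ θ x, 0 ≤ r θ x) (hlip : ∀ θ x, r θ x ≤ Real.exp (m x * |θ - θ₀|))
    {θ δ : ℝ} (hθ : |θ - θ₀| ≤ δ) (x : ι → X) :
    ∏ i ∈ s, r θ (x i) ≤ ∏ i ∈ s, Real.exp (m (x i) * δ) :=
  Finset.prod_le_prod (fun i _ => hr0 θ (x i)) fun i _ =>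
    (hlip θ (x i)).trans (Real.exp_le_exp.2 (mul_le_mul_of_nonneg_left hθ (hm (x i))))

theorem setIntegral_prod_likelihoodRatio_le {X : Type*} [MeasurableSpace X] {μ : Measure X}
    [IsProbabilityMeasure μ] {θ₀ M : ℝ} {m : X → ℝ} {r : ℝ → X → ℝ}
    {p q : ℝ} (hpq : p.HolderConjugate q)
    (hmmeas : Measurable m) (hm : ∀ x, 0 ≤ m x)
    (hr0 : ∀ θ x, 0 ≤ r θ x) (hlip : ∀ θ x, r θ x ≤ Real.exp (m x * |θ - θ₀|))
    (hint : Integrable (fun x => Real.exp (q * M * m x)) μ)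
    {n : ℕ} (hn : n ≠ 0) (F : Set (Fin n → X)) (h : (Fin n → X) → ℝ) (hb : ∀ x, |h x| ≤ M) :
    ∫ x in F, ∏ i, r (θ₀ + h x / n) (x i) ∂(Measure.pi fun _ => μ)
      ≤ (Measure.pi fun _ : Fin n => μ).real F ^ (1 / p)
        * Real.exp (∫ y, Real.exp (q * M * m y) ∂μ - 1) ^ (1 / q) := by
  set e : X → ℝ := fun y => Real.exp (m y * (M / n))
  have he0 : 0 ≤ e := fun y => (Real.exp_pos _).le
  have he_rpow : (fun y => e y ^ q) = fun y => Real.exp ((n : ℝ)⁻¹ * (q * M * m y)) := by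
    funext y
    rw [← Real.exp_mul]
    ring_nf
  have ha : AEStronglyMeasurable (fun y => q * M * m y) μ :=
    (hmmeas.const_mul _).aestronglyMeasurable
  have hn' : (1 : ℝ) ≤ n := by exact_mod_cast Nat.one_le_iff_ne_zero.2 hn
  have he_int : Integrable (fun y => e y ^ q) μ := he_rpow ▸
    integrable_exp_mul_of_integrable_exp ha hint (by positivity) (inv_le_one_of_one_le₀ hn')
  have hG_meas : AEStronglyMeasurable (fun x : Fin n → X => ∏ i, e (x i))
      (Measure.pi fun _ => μ) := by
    have he_meas : Measurable e := (hmmeas.mul_const _).exp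
    exact (Finset.measurable_prod _ fun i _ =>
      he_meas.comp (measurable_pi_apply i)).aestronglyMeasurable
  have hG_int := integrable_pi_prod_rpow (ι := Fin n) μ he0 he_int
  have hG_memLp := memLp_ofReal_of_integrable_rpow (fun x => Finset.prod_nonneg fun i _ => he0 _)
    hG_meas hpq.symm.pos hG_int
  calc ∫ x in F, ∏ i, r (θ₀ + h x / n) (x i) ∂(Measure.pi fun _ => μ)
      ≤ ∫ x in F, ∏ i, e (x i) ∂(Measure.pi fun _ => μ) := by
        refine integral_mono_of_nonneg
          (.of_forall fun x => Finset.prod_nonneg fun i _ => hr0 _ _)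
          ((hG_memLp.integrable (by simpa using hpq.symm.lt.le)).restrict) (.of_forall fun x => ?_)
        refine prod_le_prod_exp_of_abs_sub_le _ hm hr0 hlip ?_ x
        rw [add_sub_cancel_left, abs_div, Nat.abs_cast]
        exact div_le_div_of_nonneg_right (hb x) (Nat.cast_nonneg n)
    _ ≤ (Measure.pi fun _ : Fin n => μ).real F ^ (1 / p)
          * (∫ x, (∏ i, e (x i)) ^ q ∂(Measure.pi fun _ => μ)) ^ (1 / q) :=
        setIntegral_le_measureReal_rpow_mul_integral_rpow hpq F
          (fun x => Finset.prod_nonneg fun i _ => he0 _) hG_meas hG_int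
    _ ≤ (Measure.pi fun _ : Fin n => μ).real F ^ (1 / p)
          * Real.exp (∫ y, Real.exp (q * M * m y) ∂μ - 1) ^ (1 / q) := by
        rw [integral_pi_prod_rpow μ he0, Fintype.card_fin, he_rpow]
        gcongr
        · exact one_div_nonneg.2 hpq.symm.nonneg
        · exact integral_exp_inv_mul_pow_le ha hint hn

theorem stmt_11_general {X : Type*} [MeasurableSpace X] (μ : Measure X) [IsProbabilityMeasure μ]
    (θ₀ M q : ℝ) (hq : 1 < q)
    (m : X → ℝ) (hmmeas : Measurable m) (hmpos : ∀ x, 0 < m x)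
    (r : ℝ → X → ℝ) (hr0 : ∀ θ x, 0 ≤ r θ x)
    (hlip : ∀ θ x, r θ x ≤ Real.exp (m x * |θ - θ₀|))
    (hint : Integrable (fun x => Real.exp (q * M * m x)) μ)
    (F : (n : ℕ) → Set (Fin n → X))
    (h : (n : ℕ) → (Fin n → X) → ℝ) (hb : ∀ n x, |h n x| ≤ M)
    (hF0 : Tendsto (fun n => (Measure.pi fun _ : Fin n => μ) (F n)) atTop (nhds 0)) :
    Tendsto
      (fun n => ∫ x in F n, (∏ i, r (θ₀ + h n x / n) (x i)) ∂(Measure.pi fun _ : Fin n => μ))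
      atTop (nhds 0) := by
  have hpq : q.conjExponent.HolderConjugate q := (Real.HolderConjugate.conjExponent hq).symm
  set K := Real.exp (∫ y, Real.exp (q * M * m y) ∂μ - 1) ^ (1 / q)
  have hbound : Tendsto (fun n => (Measure.pi fun _ : Fin n => μ).real (F n)
      ^ (1 / q.conjExponent) * K) atTop (nhds 0) := by
    have hF0' := ((ENNReal.tendsto_toReal ENNReal.zero_ne_top).comp hF0).rpow_const
      (Or.inr (one_div_nonneg.2 hpq.nonneg))
    have := hF0'.mul_const K
    rwa [ENNReal.toReal_zero, Real.zero_rpow (one_div_pos.2 hpq.pos).ne', zero_mul] at this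
  refine tendsto_of_tendsto_of_tendsto_of_le_of_le' tendsto_const_nhds hbound
    (.of_forall fun n => integral_nonneg fun x => Finset.prod_nonneg fun i _ => hr0 _ _) ?_
  filter_upwards [eventually_ne_atTop 0] with n hn
  exact setIntegral_prod_likelihoodRatio_le hpq hmmeas (fun x => (hmpos x).le) hr0 hlip hint hn
    (F n) (h n) (hb n)

/-- One-sided contiguity under a log-Lipschitz bound: if the likelihood ratios
`r θ x = p_{θ,η}(x)/p_{θ₀,η}(x)` satisfy `r θ x ≤ exp(m(x)|θ−θ₀|)` with
`E[e^{qM·m}] < ∞` for some `q > 1`, and `P_{θ₀,η}ⁿ(Fₙ) → 0`, then also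
`P_{θ₀+hₙ/n,η}ⁿ(Fₙ) = ∫_{Fₙ} ∏ᵢ r(θ₀+hₙ/n)(Xᵢ) dP_{θ₀,η}ⁿ → 0` for any
stochastic sequence `hₙ` bounded by `M`. -/
theorem stmt_11 {X : Type*} [MeasurableSpace X] (μ : Measure X) [IsProbabilityMeasure μ]
    (θ₀ M q : ℝ) (hM : 0 < M) (hq : 1 < q)
    (m : X → ℝ) (hmmeas : Measurable m) (hmpos : ∀ x, 0 < m x)
    (r : ℝ → X → ℝ) (hr0 : ∀ θ x, 0 ≤ r θ x)
    (hrmeas : ∀ θ, Measurable (r θ))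
    (hlip : ∀ θ x, r θ x ≤ Real.exp (m x * |θ - θ₀|))
    (hint : Integrable (fun x => Real.exp (q * M * m x)) μ)
    (F : (n : ℕ) → Set (Fin n → X)) (hF : ∀ n, MeasurableSet (F n))
    (h : (n : ℕ) → (Fin n → X) → ℝ) (hb : ∀ n x, |h n x| ≤ M)
    (hF0 : Tendsto (fun n => (Measure.pi fun _ : Fin n => μ) (F n)) atTop (nhds 0)) :
    Tendsto
      (fun n => ∫ x in F n, (∏ i, r (θ₀ + h n x / n) (x i)) ∂(Measure.pi fun _ : Fin n => μ))
      atTop (nhds 0) :=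
  stmt_11_general μ θ₀ M q hq m hmmeas hmpos r hr0 hlip hint F h hb hF0
end

section
/- Let η be a probability density on [0,1] with e^{−2S} ≤ η ≤ e^{2S} and |η'| ≤ 2S·η (so η ∈ C¹ with controlled derivative). For the scale family p_θ(x) = (1/θ)η(x/θ)·1{0 ≤ x ≤ θ} and θ_n = θ₀ + h/n with 0 ≤ h ≤ M < nθ₀/2, the squared Hellinger distance satisfies H²(P_{θ_n}, P_{θ₀}) ≤ C(S, θ₀)·M/n for a constant C(S, θ₀) depending only on S and θ₀ (for n large). -/
open MeasureTheory

/-- The scale family `p_θ(x) = (1/θ)·η(x/θ)·1{0 ≤ x ≤ θ}`. -/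
noncomputable def scaleDens (η : ℝ → ℝ) (θ : ℝ) (x : ℝ) : ℝ :=
  if 0 ≤ x ∧ x ≤ θ then (1 / θ) * η (x / θ) else 0

/-!
Compare the Hellinger integrand with the `L¹` one: `(√a - √b)² ≤ |a - b|`. Let `θ₀ ≤ θ₁`. On
`[0, θ₀]` both densities are `θ⁻¹ η(x/θ)`, whose `θ`-derivative `-(η(u) + u η'(u)) / θ²`
(`u = x/θ ∈ [0,1]`) is at most `(A + B)/θ₀²` when `|η| ≤ A`, `|η'| ≤ B` on `[0,1]`; the mean
value theorem bounds the difference there by `(A + B)(θ₁ - θ₀)/θ₀²`. On `(θ₀, θ₁]` only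
`p_{θ₁} ≤ A/θ₀` remains. Hence `H² ≤ (2A + B)(θ₁ - θ₀)/θ₀`; take `A = e^{2S}`, `B = 2S e^{2S}`.
-/

open Set

lemma sq_sqrt_sub_sqrt_le_abs_sub {a b : ℝ} (ha : 0 ≤ a) (hb : 0 ≤ b) :
    (√a - √b) ^ 2 ≤ |a - b| := by
  have hsa := Real.sq_sqrt ha
  have hsb := Real.sq_sqrt hb
  have := Real.sqrt_nonneg a
  have := Real.sqrt_nonneg b
  rcases le_total b a with h | h
  · have := Real.sqrt_le_sqrt h
    rw [abs_of_nonneg (sub_nonneg.2 h)]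
    nlinarith
  · have := Real.sqrt_le_sqrt h
    rw [abs_of_nonpos (sub_nonpos.2 h)]
    nlinarith

lemma div_mem_Icc_zero_one {x θ : ℝ} (hx : x ∈ Icc 0 θ) : x / θ ∈ Icc (0 : ℝ) 1 :=
  ⟨div_nonneg hx.1 (hx.1.trans hx.2), div_le_one_of_le₀ hx.2 (hx.1.trans hx.2)⟩

lemma scaleDens_of_mem {η : ℝ → ℝ} {θ x : ℝ} (hx : x ∈ Icc 0 θ) :
    scaleDens η θ x = θ⁻¹ * η (x / θ) := by
  simp [scaleDens, hx.1, hx.2]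

lemma scaleDens_of_notMem {η : ℝ → ℝ} {θ x : ℝ} (hx : x ∉ Icc 0 θ) : scaleDens η θ x = 0 :=
  if_neg hx

lemma scaleDens_nonneg {η : ℝ → ℝ} (hη : ∀ u ∈ Icc (0 : ℝ) 1, 0 ≤ η u) (θ x : ℝ) :
    0 ≤ scaleDens η θ x := by
  by_cases hx : x ∈ Icc 0 θ
  · rw [scaleDens_of_mem hx]
    exact mul_nonneg (inv_nonneg.2 (hx.1.trans hx.2)) (hη _ (div_mem_Icc_zero_one hx))
  · rw [scaleDens_of_notMem hx]

lemma hasDerivAt_inv_mul_comp_div {η : ℝ → ℝ} {x θ : ℝ} (hθ : θ ≠ 0)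
    (hη : DifferentiableAt ℝ η (x / θ)) :
    HasDerivAt (fun t => t⁻¹ * η (x / t))
      (-(η (x / θ) + x / θ * deriv η (x / θ)) / θ ^ 2) θ := by
  have hdiv : HasDerivAt (fun t => x / t) (-(x / θ ^ 2)) θ := by
    simpa [div_eq_mul_inv] using (hasDerivAt_inv hθ).const_mul x
  refine ((hasDerivAt_inv hθ).mul (hη.hasDerivAt.comp θ hdiv)).congr_deriv ?_
  simp only [Function.comp_apply]
  field_simp
  ring

lemma abs_inv_mul_comp_div_sub_le {η : ℝ → ℝ} {A B : ℝ}
    (hηd : ∀ u ∈ Icc (0 : ℝ) 1, DifferentiableAt ℝ η u)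
    (hηA : ∀ u ∈ Icc (0 : ℝ) 1, |η u| ≤ A) (hηB : ∀ u ∈ Icc (0 : ℝ) 1, |deriv η u| ≤ B)
    {x θ₀ θ₁ : ℝ} (hθ₀ : 0 < θ₀) (hθ : θ₀ ≤ θ₁) (hx : x ∈ Icc 0 θ₀) :
    |θ₁⁻¹ * η (x / θ₁) - θ₀⁻¹ * η (x / θ₀)| ≤ (A + B) / θ₀ ^ 2 * (θ₁ - θ₀) := by
  have hu : ∀ θ ∈ Icc θ₀ θ₁, x / θ ∈ Icc (0 : ℝ) 1 := fun θ hθ' =>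
    div_mem_Icc_zero_one ⟨hx.1, hx.2.trans hθ'.1⟩
  refine norm_image_sub_le_of_norm_deriv_le_segment' (f := fun t => t⁻¹ * η (x / t))
    (fun θ hθ' => (hasDerivAt_inv_mul_comp_div (hθ₀.trans_le hθ'.1).ne'
      (hηd _ (hu θ hθ'))).hasDerivWithinAt) (fun θ hθ' => ?_) θ₁ (right_mem_Icc.2 hθ)
  have hθ'' : θ ∈ Icc θ₀ θ₁ := Ico_subset_Icc_self hθ'
  have hθpos : 0 < θ := hθ₀.trans_le hθ''.1
  obtain ⟨hu₀, hu₁⟩ := hu θ hθ''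
  have hA := hηA _ (hu θ hθ'')
  have hB := hηB _ (hu θ hθ'')
  have hnum : |η (x / θ) + x / θ * deriv η (x / θ)| ≤ A + B := by
    calc |η (x / θ) + x / θ * deriv η (x / θ)|
        ≤ |η (x / θ)| + x / θ * |deriv η (x / θ)| :=
          (abs_add_le _ _).trans_eq (by rw [abs_mul, abs_of_nonneg hu₀])
      _ ≤ A + 1 * B := by gcongr
      _ = A + B := by rw [one_mul]
  rw [Real.norm_eq_abs, abs_div, abs_neg, abs_of_pos (by positivity : (0 : ℝ) < θ ^ 2)]
  gcongr
  · exact (abs_nonneg _).trans hnum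
  · exact hθ''.1

lemma abs_scaleDens_sub_le {η : ℝ → ℝ} {A B : ℝ}
    (hηd : ∀ u ∈ Icc (0 : ℝ) 1, DifferentiableAt ℝ η u)
    (hη₀ : ∀ u ∈ Icc (0 : ℝ) 1, 0 ≤ η u) (hηA : ∀ u ∈ Icc (0 : ℝ) 1, η u ≤ A)
    (hηB : ∀ u ∈ Icc (0 : ℝ) 1, |deriv η u| ≤ B)
    {θ₀ θ₁ : ℝ} (hθ₀ : 0 < θ₀) (hθ : θ₀ ≤ θ₁) (x : ℝ) :
    |scaleDens η θ₁ x - scaleDens η θ₀ x| ≤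
      (Icc 0 θ₀).indicator (fun _ => (A + B) / θ₀ ^ 2 * (θ₁ - θ₀)) x +
        (Ioc θ₀ θ₁).indicator (fun _ => A / θ₀) x := by
  have h01 : (0 : ℝ) ∈ Icc (0 : ℝ) 1 := left_mem_Icc.2 zero_le_one
  have hA : 0 ≤ A := (hη₀ 0 h01).trans (hηA 0 h01)
  have hB : 0 ≤ B := (abs_nonneg _).trans (hηB 0 h01)
  have hind₁ : 0 ≤ (Icc 0 θ₀).indicator (fun _ => (A + B) / θ₀ ^ 2 * (θ₁ - θ₀)) x :=
    indicator_nonneg (fun _ _ => by have := sub_nonneg.2 hθ; positivity) x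
  have hind₂ : 0 ≤ (Ioc θ₀ θ₁).indicator (fun _ => A / θ₀) x :=
    indicator_nonneg (fun _ _ => by positivity) x
  by_cases hx₀ : x ∈ Icc 0 θ₀
  · rw [scaleDens_of_mem ⟨hx₀.1, hx₀.2.trans hθ⟩, scaleDens_of_mem hx₀, indicator_of_mem hx₀]
    have := abs_inv_mul_comp_div_sub_le hηd
      (fun u hu => (abs_of_nonneg (hη₀ u hu)).trans_le (hηA u hu)) hηB hθ₀ hθ hx₀
    linarith
  rw [scaleDens_of_notMem hx₀, sub_zero]
  by_cases hx₁ : x ∈ Ioc θ₀ θ₁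
  · have hx₁' : x ∈ Icc 0 θ₁ := ⟨hθ₀.le.trans hx₁.1.le, hx₁.2⟩
    have hu := div_mem_Icc_zero_one hx₁'
    rw [abs_of_nonneg (scaleDens_nonneg hη₀ _ _), scaleDens_of_mem hx₁', indicator_of_mem hx₁,
      indicator_of_notMem hx₀, zero_add]
    calc θ₁⁻¹ * η (x / θ₁) ≤ θ₀⁻¹ * A :=
          mul_le_mul (inv_anti₀ hθ₀ hθ) (hηA _ hu) (hη₀ _ hu) (by positivity)
      _ = A / θ₀ := inv_mul_eq_div _ _
  · have hx₁' : x ∉ Icc 0 θ₁ := fun h =>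
      (le_or_gt x θ₀).elim (fun h' => hx₀ ⟨h.1, h'⟩) (fun h' => hx₁ ⟨h', h.2⟩)
    rw [scaleDens_of_notMem hx₁', abs_zero]
    positivity

theorem integral_sq_sqrt_scaleDens_sub_le {η : ℝ → ℝ} {A B : ℝ}
    (hηd : ∀ u ∈ Icc (0 : ℝ) 1, DifferentiableAt ℝ η u)
    (hη₀ : ∀ u ∈ Icc (0 : ℝ) 1, 0 ≤ η u) (hηA : ∀ u ∈ Icc (0 : ℝ) 1, η u ≤ A)
    (hηB : ∀ u ∈ Icc (0 : ℝ) 1, |deriv η u| ≤ B)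
    {θ₀ θ₁ : ℝ} (hθ₀ : 0 < θ₀) (hθ : θ₀ ≤ θ₁) :
    ∫ x, (√(scaleDens η θ₁ x) - √(scaleDens η θ₀ x)) ^ 2 ≤ (2 * A + B) / θ₀ * (θ₁ - θ₀) := by
  have hint₁ : Integrable ((Icc 0 θ₀).indicator fun _ => (A + B) / θ₀ ^ 2 * (θ₁ - θ₀)) :=
    (integrableOn_const measure_Icc_lt_top.ne).integrable_indicator measurableSet_Icc
  have hint₂ : Integrable ((Ioc θ₀ θ₁).indicator fun _ => A / θ₀) :=
    (integrableOn_const measure_Ioc_lt_top.ne).integrable_indicator measurableSet_Ioc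
  calc ∫ x, (√(scaleDens η θ₁ x) - √(scaleDens η θ₀ x)) ^ 2
      ≤ ∫ x, ((Icc 0 θ₀).indicator (fun _ => (A + B) / θ₀ ^ 2 * (θ₁ - θ₀)) x +
          (Ioc θ₀ θ₁).indicator (fun _ => A / θ₀) x) :=
        integral_mono_of_nonneg (ae_of_all _ fun _ => sq_nonneg _) (hint₁.add hint₂)
          (ae_of_all _ fun x => (sq_sqrt_sub_sqrt_le_abs_sub (scaleDens_nonneg hη₀ _ _)
            (scaleDens_nonneg hη₀ _ _)).trans (abs_scaleDens_sub_le hηd hη₀ hηA hηB hθ₀ hθ x))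
    _ = θ₀ * ((A + B) / θ₀ ^ 2 * (θ₁ - θ₀)) + (θ₁ - θ₀) * (A / θ₀) := by
        rw [integral_add hint₁ hint₂, integral_indicator_const _ measurableSet_Icc,
          integral_indicator_const _ measurableSet_Ioc, Real.volume_real_Icc_of_le hθ₀.le,
          Real.volume_real_Ioc_of_le hθ, smul_eq_mul, smul_eq_mul, sub_zero]
    _ = (2 * A + B) / θ₀ * (θ₁ - θ₀) := by
        field_simp
        ring

/-- Hellinger bound for the scale model: for densities `η` on `[0,1]` with
`e^{−2S} ≤ η ≤ e^{2S}` and `|η'| ≤ 2S·η`, and `θₙ = θ₀ + h/n` with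
`0 ≤ h ≤ M < nθ₀/2`, the squared Hellinger distance satisfies
`H²(P_{θₙ}, P_{θ₀}) ≤ C(S,θ₀)·M/n` for a constant depending only on `S, θ₀`. -/
theorem stmt_19 (S θ₀ : ℝ) (hS : 0 < S) (hθ₀ : 0 < θ₀) :
    ∃ C : ℝ, 0 < C ∧
      ∀ η : ℝ → ℝ, Differentiable ℝ η →
        (∀ x ∈ Set.Icc (0 : ℝ) 1, Real.exp (-2 * S) ≤ η x ∧ η x ≤ Real.exp (2 * S)) →
        (∀ x ∈ Set.Icc (0 : ℝ) 1, |deriv η x| ≤ 2 * S * η x) →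
        (∫ x in (0 : ℝ)..1, η x = 1) →
        ∀ (n : ℕ) (M h : ℝ), 1 ≤ n → 0 < M → 0 ≤ h → h ≤ M → M < n * θ₀ / 2 →
          ∫ x, (Real.sqrt (scaleDens η (θ₀ + h / n) x) -
              Real.sqrt (scaleDens η θ₀ x)) ^ 2 ≤ C * M / n := by
  refine ⟨(2 + 2 * S) * Real.exp (2 * S) / θ₀, by positivity, ?_⟩
  intro η hηd hηb hη' _ n M h hn _ hh hhM _
  have hη₀ : ∀ u ∈ Icc (0 : ℝ) 1, 0 ≤ η u := fun u hu => (Real.exp_pos _).le.trans (hηb u hu).1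
  have hηB : ∀ u ∈ Icc (0 : ℝ) 1, |deriv η u| ≤ 2 * S * Real.exp (2 * S) := fun u hu =>
    (hη' u hu).trans (mul_le_mul_of_nonneg_left (hηb u hu).2 (by positivity))
  have hn₀ : (0 : ℝ) < n := by exact_mod_cast hn
  calc ∫ x, (√(scaleDens η (θ₀ + h / n) x) - √(scaleDens η θ₀ x)) ^ 2
      ≤ (2 * Real.exp (2 * S) + 2 * S * Real.exp (2 * S)) / θ₀ * (θ₀ + h / n - θ₀) :=
        integral_sq_sqrt_scaleDens_sub_le (fun u _ => hηd u) hη₀ (fun u hu => (hηb u hu).2) hηB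
          hθ₀ (le_add_of_nonneg_right (by positivity))
    _ = (2 + 2 * S) * Real.exp (2 * S) / θ₀ * (h / n) := by ring
    _ ≤ (2 + 2 * S) * Real.exp (2 * S) / θ₀ * (M / n) := by gcongr
    _ = (2 + 2 * S) * Real.exp (2 * S) / θ₀ * M / n := mul_div_assoc' _ _ _
end
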